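/- arXiv:1111.7005 — 2 statements merged into one kernel-verified Lean document; each statement's English description precedes it below -/
import Mathlib

section
/- Let U ⊆ ℂ³⊗ℂ³ ≅ Mat₃(ℂ) be the 3-dimensional space of matrices {[[u,t,s],[t,s,0],[s,0,0]] : s,t,u ∈ ℂ}. Then the rank of U, i.e., the smallest r such that U is contained in an r-dimensional subspace of Mat₃(ℂ) spanned by rank-one matrices, equals 5. -/
/-!
Write `H(s,t,u)` for the matrix `[[u,t,s],[t,s,0],[s,0,0]]`. It is the moment matrix
`(m_{i+j})` of the moments `(u,t,s,0,0)`, and these are the moments of a combination of point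
masses at `0, ±1, ±2`; the moment matrix of the point mass at `x` is the rank-one matrix
`v vᵀ` with `v = (1,x,x²)`, so five rank-one matrices suffice.

Conversely, suppose `H(1,0,0)`, `H(0,1,0)`, `H(0,0,1)` have coordinates `γ, β, α` with respect to
`r ≤ 4` matrices of rank at most one. If some `2 × 2` minor `α_i β_j - α_j β_i` were nonzero, a
suitable `H(1,x,y)` would have coordinates vanishing at `i` and `j`, hence rank at most `r - 2 ≤ 2`,
while `det H(1,x,y) = -1`. So `β` is proportional to `α`, i.e. `H(0,1,0)` is a multiple of
`H(0,0,1)`, which it is not.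
-/

open Matrix Finset

namespace Matrix

variable {K m n : Type*} [Field K] [Fintype n]

theorem rank_add_le (A B : Matrix m n K) : (A + B).rank ≤ A.rank + B.rank := by
  rw [rank, rank, rank, mulVecLin_add]
  refine (Submodule.finrank_mono ?_).trans (Submodule.finrank_add_le_finrank_add_finrank _ _)
  rintro x ⟨y, rfl⟩
  exact Submodule.add_mem_sup ⟨y, rfl⟩ ⟨y, rfl⟩

theorem rank_smul_le (c : K) (A : Matrix m n K) : (c • A).rank ≤ A.rank := by
  rcases eq_or_ne c 0 with rfl | hc
  · simp [rank_zero]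
  · exact (rank_smul_of_mem_nonZeroDivisors A (mem_nonZeroDivisors_of_ne_zero hc)).le

theorem rank_sum_smul_le_card {ι : Type*} (M : ι → Matrix m n K) (hM : ∀ i, (M i).rank ≤ 1)
    (c : ι → K) (s : Finset ι) : (∑ k ∈ s, c k • M k).rank ≤ #s :=
  calc (∑ k ∈ s, c k • M k).rank ≤ ∑ k ∈ s, (c k • M k).rank :=
        le_sum_of_subadditive rank (rank_zero (R := K)).le rank_add_le s _
    _ ≤ ∑ _k ∈ s, 1 := sum_le_sum fun k _ => (rank_smul_le _ _).trans (hM k)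
    _ = #s := by simp

theorem rank_sum_smul_le_card_of_eq_zero {ι : Type*} [Fintype ι] (M : ι → Matrix m n K)
    (hM : ∀ i, (M i).rank ≤ 1) {c : ι → K} (s : Finset ι) (hc : ∀ k ∉ s, c k = 0) :
    (∑ k, c k • M k).rank ≤ #s := by
  rw [← sum_subset (subset_univ s) fun k _ hk => by rw [hc k hk, zero_smul]]
  exact rank_sum_smul_le_card M hM c s

theorem rank_vecMulVec_eq_one [DecidableEq n] {w : m → K} {v : n → K} (hw : w ≠ 0)
    (hv : v ≠ 0) : (vecMulVec w v).rank = 1 := by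
  refine (rank_vecMulVec_le w v).antisymm (Module.finrank_pos_iff_exists_ne_zero.mpr ?_)
  obtain ⟨i, hi⟩ := Function.ne_iff.mp hw
  obtain ⟨j, hj⟩ := Function.ne_iff.mp hv
  refine ⟨⟨_, Pi.single j 1, rfl⟩, fun h => ?_⟩
  have hij := congrFun (congrArg Subtype.val h) i
  simp only [mulVecLin_apply, mulVec_single_one, col_apply, vecMulVec_apply,
    ZeroMemClass.coe_zero, Pi.zero_apply, mul_eq_zero] at hij
  exact hij.elim hi hj

end Matrix

section Hankel

variable {K : Type*} [Field K]

theorem exists_add_mul_add_mul_eq_zero {a₁ a₂ b₁ b₂ : K} (h : a₁ * b₂ - a₂ * b₁ ≠ 0)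
    (c₁ c₂ : K) : ∃ x y : K, c₁ + x * b₁ + y * a₁ = 0 ∧ c₂ + x * b₂ + y * a₂ = 0 := by
  refine ⟨(a₂ * c₁ - a₁ * c₂) / (a₁ * b₂ - a₂ * b₁), (b₁ * c₂ - b₂ * c₁) / (a₁ * b₂ - a₂ * b₁),
    ?_, ?_⟩ <;> field_simp <;> ring

theorem exists_eq_smul_of_mul_eq_mul {ι : Type*} {α β : ι → K} (hα : α ≠ 0)
    (h : ∀ i j, α i * β j = α j * β i) : ∃ c : K, β = c • α := by
  obtain ⟨i, hi⟩ := Function.ne_iff.mp hα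
  refine ⟨β i / α i, funext fun j => ?_⟩
  rw [Pi.smul_apply, smul_eq_mul, div_mul_eq_mul_div, eq_div_iff hi]
  linear_combination h i j

def hankel3 (s t u : K) : Matrix (Fin 3) (Fin 3) K :=
  !![u, t, s; t, s, 0; s, 0, 0]

theorem det_hankel3 (s t u : K) : (hankel3 s t u).det = -s ^ 3 := by
  simp [hankel3, det_fin_three, pow_succ]

theorem rank_hankel3 {s : K} (hs : s ≠ 0) (t u : K) : (hankel3 s t u).rank = 3 := by
  rw [rank_of_det_ne_zero (by simpa [det_hankel3] using hs), Fintype.card_fin]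

theorem hankel3_eq_add (s t u : K) :
    hankel3 s t u = s • hankel3 1 0 0 + t • hankel3 0 1 0 + u • hankel3 0 0 1 := by
  ext i j
  fin_cases i <;> fin_cases j <;> simp [hankel3]

theorem sum_smul_eq_hankel3 {ι : Type*} [Fintype ι] {M : ι → Matrix (Fin 3) (Fin 3) K}
    {α β γ : ι → K} (hα : ∑ k, α k • M k = hankel3 0 0 1)
    (hβ : ∑ k, β k • M k = hankel3 0 1 0) (hγ : ∑ k, γ k • M k = hankel3 1 0 0) (s t u : K) :
    ∑ k, (s * γ k + t * β k + u * α k) • M k = hankel3 s t u := by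
  simp only [add_smul, mul_smul, sum_add_distrib, ← smul_sum, hα, hβ, hγ, hankel3_eq_add s t u]

theorem mul_eq_mul_of_sum_smul_eq_hankel3 {r : ℕ} (hr : r ≤ 4)
    {M : Fin r → Matrix (Fin 3) (Fin 3) K} (hM : ∀ i, (M i).rank ≤ 1) {α β γ : Fin r → K}
    (hα : ∑ k, α k • M k = hankel3 0 0 1)
    (hβ : ∑ k, β k • M k = hankel3 0 1 0) (hγ : ∑ k, γ k • M k = hankel3 1 0 0) (i j : Fin r) :
    α i * β j = α j * β i := by
  by_contra hne
  have hij : i ≠ j := by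
    rintro rfl
    exact hne rfl
  obtain ⟨x, y, hi, hj⟩ := exists_add_mul_add_mul_eq_zero (sub_ne_zero.mpr hne) (γ i) (γ j)
  have hvanish : ∀ k ∉ univ \ {i, j}, 1 * γ k + x * β k + y * α k = 0 := by
    intro k hk
    rcases (by simpa [or_iff_not_imp_left] using hk : k = i ∨ k = j) with rfl | rfl <;> simpa
  have hrank := rank_sum_smul_le_card_of_eq_zero M hM _ hvanish
  rw [sum_smul_eq_hankel3 hα hβ hγ, rank_hankel3 one_ne_zero,
    card_sdiff_of_subset (subset_univ _), card_univ, Fintype.card_fin, card_pair hij] at hrank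
  omega

theorem five_le_of_hankel3_mem_span {r : ℕ} {M : Fin r → Matrix (Fin 3) (Fin 3) K}
    (hM : ∀ i, (M i).rank ≤ 1) (h : ∀ s t u, hankel3 s t u ∈ Submodule.span K (Set.range M)) :
    5 ≤ r := by
  by_contra! hr
  obtain ⟨α, hα⟩ := (Submodule.mem_span_range_iff_exists_fun K).mp (h 0 0 1)
  obtain ⟨β, hβ⟩ := (Submodule.mem_span_range_iff_exists_fun K).mp (h 0 1 0)
  obtain ⟨γ, hγ⟩ := (Submodule.mem_span_range_iff_exists_fun K).mp (h 1 0 0)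
  have hα0 : α ≠ 0 := by
    rintro rfl
    simpa [hankel3] using congrFun (congrFun hα 0) 0
  obtain ⟨c, rfl⟩ := exists_eq_smul_of_mul_eq_mul hα0
    (mul_eq_mul_of_sum_smul_eq_hankel3 (by omega) hM hα hβ hγ)
  have hprop : hankel3 0 1 0 = c • hankel3 (0 : K) 0 1 := by
    simp only [← hα, ← hβ, smul_sum, Pi.smul_apply, smul_smul, smul_eq_mul]
  simpa [hankel3] using congrFun (congrFun hprop 0) 1

def pointMomentMatrix (x : K) : Matrix (Fin 3) (Fin 3) K :=
  vecMulVec ![1, x, x ^ 2] ![1, x, x ^ 2]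

theorem rank_pointMomentMatrix (x : K) : (pointMomentMatrix x).rank = 1 :=
  have hv : ![1, x, x ^ 2] ≠ 0 := fun h => one_ne_zero (congrFun h 0)
  rank_vecMulVec_eq_one hv hv

theorem hankel3_mem_span_pointMomentMatrix [CharZero K] (s t u : K) :
    hankel3 s t u ∈ Submodule.span K (Set.range ![pointMomentMatrix 0, pointMomentMatrix 1,
      pointMomentMatrix (-1), pointMomentMatrix 2, pointMomentMatrix (-2)]) := by
  rw [Submodule.mem_span_range_iff_exists_fun]
  refine ⟨![u - 5/4*s, 2/3*t + 2/3*s, -(2/3)*t + 2/3*s, -(1/12)*t - 1/24*s,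
    1/12*t - 1/24*s], ?_⟩
  ext i j
  fin_cases i <;> fin_cases j <;> simp [Fin.sum_univ_five, hankel3, pointMomentMatrix] <;> ring

end Hankel

/-- The rank of the 3-dimensional space of matrices `{[[u,t,s],[t,s,0],[s,0,0]]}`, i.e. the
smallest `r` such that it is contained in the span of `r` rank-one matrices, equals 5. -/
theorem space_rank_hankel_eq_five :
    IsLeast {r : ℕ | ∃ M : Fin r → Matrix (Fin 3) (Fin 3) ℂ,
        (∀ i, (M i).rank = 1) ∧
        ∀ s t u : ℂ, (!![u, t, s; t, s, 0; s, 0, 0] : Matrix (Fin 3) (Fin 3) ℂ)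
          ∈ Submodule.span ℂ (Set.range M)} 5 := by
  refine ⟨⟨_, fun i => ?_, hankel3_mem_span_pointMomentMatrix⟩, ?_⟩
  · fin_cases i <;> exact rank_pointMomentMatrix _
  · rintro r ⟨M, hM, hspan⟩
    exact five_le_of_hankel3_mem_span (fun i => (hM i).le) hspan
end

section
/- The tensor T = a₁⊗(b₁⊗c₂ + b₂⊗c₁) + a₂⊗b₁⊗c₁ + a₃⊗(b₃⊗c₁ + b₁⊗c₃) ∈ ℂ³⊗ℂ³⊗ℂ³ (with {a_i},{b_i},{c_i} bases) has tensor rank exactly 5. -/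
/-!
The decomposition of length 5 is explicit. For the lower bound, take four terms
`xᵢ ⊗ yᵢ ⊗ zᵢ` and contract the `A`-factor with functionals `φ`: the slice `T(φ)` is the
matrix `[[φ a₁, φ a₀, φ a₂], [φ a₀, 0, 0], [φ a₂, 0, 0]]`, always singular, and equals
`∑ φ(xᵢ) yᵢ zᵢᵀ`. The slice at `a₁*` is nonzero, so some `x_{i₀}` has a nonzero `a₁`-coordinate;
on the plane of functionals vanishing on `x_{i₀}` the slices are sums of three rank-one terms,
and this plane contains functionals with `(φ a₀, φ a₂) = (1, 0)` and `(0, 1)`, whose slices have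
no common left or right kernel. Either one of the three terms vanishes on the whole plane, or a
generic slice of the plane involves all three terms; being singular, it forces the three `yᵢ`
or the three `zᵢ` to be dependent. In both cases a nonzero vector is orthogonal to the
remaining `yᵢ` (or `zᵢ`), hence lies in a common kernel of the slices of the plane.
-/

open scoped TensorProduct
open Matrix

namespace Matrix

variable {K n m : Type*} [Field K] [Fintype n]

theorem sum_smul_vecMulVec_eq_transpose_mul_diagonal_mul [DecidableEq n]
    (γ : n → K) (Y Z : n → m → K) :
    ∑ i, γ i • vecMulVec (Y i) (Z i) = (of Y)ᵀ * diagonal γ * of Z := by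
  ext k l
  rw [mul_apply]
  simp only [sum_apply, smul_apply, vecMulVec_apply, mul_diagonal, transpose_apply, of_apply,
    smul_eq_mul]
  exact Finset.sum_congr rfl fun i _ => by ring

theorem transpose_sum_smul_vecMulVec (γ : n → K) (Y Z : n → m → K) :
    (∑ i, γ i • vecMulVec (Y i) (Z i))ᵀ = ∑ i, γ i • vecMulVec (Z i) (Y i) := by
  simp only [transpose_sum, transpose_smul, transpose_vecMulVec]

theorem vecMul_sum_smul_vecMulVec_eq_zero [Fintype m] {γ : n → K} {Y Z : n → m → K}
    {w : m → K} (h : ∀ i, w ⬝ᵥ Y i = 0) : w ᵥ* ∑ i, γ i • vecMulVec (Y i) (Z i) = 0 := by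
  simp only [vecMul_sum, vecMul_smul, vecMul_vecMulVec, h, zero_smul, smul_zero,
    Finset.sum_const_zero]

theorem det_eq_zero_or_det_eq_zero_of_det_sum_smul_vecMulVec [DecidableEq n]
    {γ : n → K} {Y Z : n → n → K} (hγ : ∀ i, γ i ≠ 0)
    (h : (∑ i, γ i • vecMulVec (Y i) (Z i)).det = 0) : (of Y).det = 0 ∨ (of Z).det = 0 := by
  rw [sum_smul_vecMulVec_eq_transpose_mul_diagonal_mul, det_mul, det_mul, det_transpose,
    det_diagonal] at h
  have hγ' : ∏ i, γ i ≠ 0 := Finset.prod_ne_zero_iff.mpr fun i _ => hγ i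
  simpa [hγ'] using h

end Matrix

theorem Module.Basis.equivFun_dotProduct_comp {K A ι : Type*} [Field K] [AddCommGroup A]
    [Module K A] [Fintype ι] (a : Module.Basis ι K A) (φ : A →ₗ[K] K) (x : A) :
    a.equivFun x ⬝ᵥ (φ ∘ a) = φ x := by
  conv_rhs => rw [← a.sum_equivFun x]
  simp only [map_sum, map_smul, smul_eq_mul, dotProduct, Function.comp_apply]

theorem exists_forall_mul_add_ne_zero {K ι : Type*} [Field K] [Infinite K] [Fintype ι]
    {α β : ι → K} (h : ∀ i, α i = 0 → β i ≠ 0) : ∃ s, ∀ i, s * α i + β i ≠ 0 := by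
  classical
  obtain ⟨s, hs⟩ := Infinite.exists_notMem_finset (Finset.univ.image fun i => -β i / α i)
  refine ⟨s, fun i hi => ?_⟩
  rcases eq_or_ne (α i) 0 with hα | hα
  · exact h i hα (by simpa [hα] using hi)
  · exact hs (Finset.mem_image.mpr ⟨i, Finset.mem_univ _, by
      rw [div_eq_iff hα]; linear_combination -hi⟩)

section Tensor

variable {K A B C : Type*} [CommRing K] [AddCommGroup A] [Module K A] [AddCommGroup B]
  [Module K B] [AddCommGroup C] [Module K C]

def typeIVTensor (a : Fin 3 → A) (b : Fin 3 → B) (c : Fin 3 → C) : A ⊗[K] (B ⊗[K] C) :=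
  a 0 ⊗ₜ (b 0 ⊗ₜ c 1 + b 1 ⊗ₜ c 0) + a 1 ⊗ₜ (b 0 ⊗ₜ c 0) + a 2 ⊗ₜ (b 2 ⊗ₜ c 0 + b 0 ⊗ₜ c 2)

def HasRankDecomp (t : A ⊗[K] (B ⊗[K] C)) (r : ℕ) : Prop :=
  ∃ (x : Fin r → A) (y : Fin r → B) (z : Fin r → C), t = ∑ i, x i ⊗ₜ[K] (y i ⊗ₜ[K] z i)

theorem HasRankDecomp.mono {t : A ⊗[K] (B ⊗[K] C)} {r n : ℕ} (h : HasRankDecomp t r)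
    (hrn : r ≤ n) : HasRankDecomp t n := by
  obtain ⟨k, rfl⟩ := Nat.exists_eq_add_of_le hrn
  obtain ⟨x, y, z, rfl⟩ := h
  refine ⟨Fin.append x 0, Fin.append y 0, Fin.append z 0, ?_⟩
  simp [Fin.sum_univ_add]

/-- `b₀⊗c₁ + b₁⊗c₀ = (b₀+b₁)⊗(c₀+c₁) - b₁⊗c₁ - b₀⊗c₀`, similarly in the `a₂`-slice, and the two
leftover `b₀⊗c₀` terms are absorbed into the `a₁`-term. -/
theorem typeIVTensor_hasRankDecomp_five (a : Fin 3 → A) (b : Fin 3 → B) (c : Fin 3 → C) :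
    HasRankDecomp (typeIVTensor (K := K) a b c) 5 := by
  refine ⟨![a 0, -a 0, a 2, -a 2, a 1 - a 0 - a 2], ![b 0 + b 1, b 1, b 0 + b 2, b 2, b 0],
    ![c 0 + c 1, c 1, c 0 + c 2, c 2, c 0], ?_⟩
  simp only [typeIVTensor, Fin.sum_univ_five, Matrix.cons_val, TensorProduct.tmul_add,
    TensorProduct.add_tmul, TensorProduct.sub_tmul, TensorProduct.neg_tmul]
  abel

end Tensor

section Slice

variable {K : Type*} [Field K]

/-- The slice `T(φ)` of `typeIVTensor` in the bases `b`, `c`, where `u j = φ(aⱼ)`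
(see `sliceMatrix_typeIVTensor`). -/
def typeIVSlice (u : Fin 3 → K) : Matrix (Fin 3) (Fin 3) K :=
  !![u 1, u 0, u 2; u 0, 0, 0; u 2, 0, 0]

theorem typeIVSlice_transpose (u : Fin 3 → K) : (typeIVSlice u)ᵀ = typeIVSlice u := by
  ext k l
  fin_cases k <;> fin_cases l <;> rfl

theorem typeIVSlice_smul_add (s : K) (p q : Fin 3 → K) :
    typeIVSlice (s • p + q) = s • typeIVSlice p + typeIVSlice q := by
  ext k l
  fin_cases k <;> fin_cases l <;> simp [typeIVSlice]

theorem det_typeIVSlice (u : Fin 3 → K) : (typeIVSlice u).det = 0 := by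
  simp [typeIVSlice, det_fin_three]

theorem eq_zero_of_vecMul_typeIVSlice_eq_zero {p q w : Fin 3 → K}
    (hp₀ : p 0 ≠ 0) (hp₂ : p 2 = 0) (hq₀ : q 0 = 0) (hq₂ : q 2 ≠ 0)
    (hwp : w ᵥ* typeIVSlice p = 0) (hwq : w ᵥ* typeIVSlice q = 0) : w = 0 := by
  have hp := congrFun hwp
  have hq := congrFun hwq
  simp only [typeIVSlice, vecMul, dotProduct, Fin.sum_univ_three, of_apply] at hp hq
  have hw₀ : w 0 = 0 := by simpa [hp₀] using hp 1
  have hw₁ : w 1 = 0 := by simpa [hw₀, hp₂, hp₀] using hp 0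
  have hw₂ : w 2 = 0 := by simpa [hw₀, hq₀, hq₂] using hq 0
  ext k
  fin_cases k <;> assumption

theorem false_of_sum_smul_vecMulVec_eq_typeIVSlice_of_det_left {p q : Fin 3 → K}
    (hp₀ : p 0 ≠ 0) (hp₂ : p 2 = 0) (hq₀ : q 0 = 0) (hq₂ : q 2 ≠ 0)
    {α β : Fin 3 → K} {Y Z : Fin 3 → Fin 3 → K}
    (hα : ∑ m, α m • vecMulVec (Y m) (Z m) = typeIVSlice p)
    (hβ : ∑ m, β m • vecMulVec (Y m) (Z m) = typeIVSlice q) (hY : (of Y).det = 0) : False := by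
  obtain ⟨w, hw, hYw⟩ := exists_mulVec_eq_zero_iff.mpr hY
  have hwY : ∀ m, w ⬝ᵥ Y m = 0 := fun m => by rw [dotProduct_comm]; exact congrFun hYw m
  exact hw <| eq_zero_of_vecMul_typeIVSlice_eq_zero hp₀ hp₂ hq₀ hq₂
    (hα ▸ vecMul_sum_smul_vecMulVec_eq_zero hwY) (hβ ▸ vecMul_sum_smul_vecMulVec_eq_zero hwY)

theorem false_of_sum_smul_vecMulVec_eq_typeIVSlice_of_det_right {p q : Fin 3 → K}
    (hp₀ : p 0 ≠ 0) (hp₂ : p 2 = 0) (hq₀ : q 0 = 0) (hq₂ : q 2 ≠ 0)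
    {α β : Fin 3 → K} {Y Z : Fin 3 → Fin 3 → K}
    (hα : ∑ m, α m • vecMulVec (Y m) (Z m) = typeIVSlice p)
    (hβ : ∑ m, β m • vecMulVec (Y m) (Z m) = typeIVSlice q) (hZ : (of Z).det = 0) : False := by
  refine false_of_sum_smul_vecMulVec_eq_typeIVSlice_of_det_left (α := α) (β := β) (Z := Y)
    hp₀ hp₂ hq₀ hq₂ ?_ ?_ hZ
  · rw [← transpose_sum_smul_vecMulVec, hα, typeIVSlice_transpose]
  · rw [← transpose_sum_smul_vecMulVec, hβ, typeIVSlice_transpose]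

theorem not_sum_three_smul_vecMulVec_eq_typeIVSlice [Infinite K] {p q : Fin 3 → K}
    (hp₀ : p 0 ≠ 0) (hp₂ : p 2 = 0) (hq₀ : q 0 = 0) (hq₂ : q 2 ≠ 0)
    {α β : Fin 3 → K} {Y Z : Fin 3 → Fin 3 → K}
    (hα : ∑ m, α m • vecMulVec (Y m) (Z m) = typeIVSlice p)
    (hβ : ∑ m, β m • vecMulVec (Y m) (Z m) = typeIVSlice q) : False := by
  by_cases hzero : ∃ m, α m = 0 ∧ β m = 0
  · obtain ⟨m, hαm, hβm⟩ := hzero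
    have drop_row : ∀ γ : Fin 3 → K, γ m = 0 →
        ∑ i, γ i • vecMulVec (Function.update Y m 0 i) (Z i) =
          ∑ i, γ i • vecMulVec (Y i) (Z i) := fun γ hγ =>
      Finset.sum_congr rfl fun i _ => by
        rcases eq_or_ne i m with rfl | hi
        · simp [hγ]
        · rw [Function.update_of_ne hi]
    exact false_of_sum_smul_vecMulVec_eq_typeIVSlice_of_det_left hp₀ hp₂ hq₀ hq₂
      ((drop_row α hαm).trans hα) ((drop_row β hβm).trans hβ)
      (det_eq_zero_of_row_eq_zero m fun k => by simp)
  · push Not at hzero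
    obtain ⟨s, hs⟩ := exists_forall_mul_add_ne_zero hzero
    have hdet : (∑ m, (s * α m + β m) • vecMulVec (Y m) (Z m)).det = 0 := by
      simp only [add_smul, mul_smul, Finset.sum_add_distrib, ← Finset.smul_sum, hα, hβ,
        ← typeIVSlice_smul_add, det_typeIVSlice]
    rcases det_eq_zero_or_det_eq_zero_of_det_sum_smul_vecMulVec hs hdet with hY | hZ
    · exact false_of_sum_smul_vecMulVec_eq_typeIVSlice_of_det_left hp₀ hp₂ hq₀ hq₂ hα hβ hY
    · exact false_of_sum_smul_vecMulVec_eq_typeIVSlice_of_det_right hp₀ hp₂ hq₀ hq₂ hα hβ hZ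

theorem not_sum_four_smul_vecMulVec_eq_typeIVSlice [Infinite K] (X Y Z : Fin 4 → Fin 3 → K)
    (h : ∀ u, ∑ i, (X i ⬝ᵥ u) • vecMulVec (Y i) (Z i) = typeIVSlice u) : False := by
  obtain ⟨i₀, hi₀⟩ : ∃ i₀, X i₀ 1 ≠ 0 := by
    by_contra! hX
    have h₀₀ := congrFun₂ (h (Pi.single 1 1)) 0 0
    simp [hX, dotProduct_single, typeIVSlice] at h₀₀
  have restrict : ∀ u, X i₀ ⬝ᵥ u = 0 → ∑ m, (X (i₀.succAbove m) ⬝ᵥ u) •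
      vecMulVec (Y (i₀.succAbove m)) (Z (i₀.succAbove m)) = typeIVSlice u := fun u hu => by
    rw [← h u, Fin.sum_univ_succAbove _ i₀, hu, zero_smul, zero_add]
  exact not_sum_three_smul_vecMulVec_eq_typeIVSlice (p := ![X i₀ 1, -X i₀ 0, 0])
    (q := ![0, -X i₀ 2, X i₀ 1]) hi₀ rfl rfl hi₀
    (restrict _ (by simp [dotProduct, Fin.sum_univ_three]; ring))
    (restrict _ (by simp [dotProduct, Fin.sum_univ_three]; ring))

variable {A B C κ μ : Type*} [AddCommGroup A] [Module K A] [AddCommGroup B]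
  [Module K B] [AddCommGroup C] [Module K C] [Fintype κ] [Fintype μ]

/-- The slice `T(φ) ∈ B ⊗ C` of `T ∈ A ⊗ (B ⊗ C)`, as a matrix in the bases `b`, `c`. -/
noncomputable def sliceMatrix (b : Module.Basis κ K B) (c : Module.Basis μ K C)
    (φ : A →ₗ[K] K) : A ⊗[K] (B ⊗[K] C) →ₗ[K] Matrix κ μ K :=
  TensorProduct.lift <| φ.smulRight <| TensorProduct.lift <|
    (vecMulVecBilin K K).compl₁₂ b.equivFun.toLinearMap c.equivFun.toLinearMap

@[simp]
theorem sliceMatrix_tmul (b : Module.Basis κ K B) (c : Module.Basis μ K C) (φ : A →ₗ[K] K)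
    (x : A) (y : B) (z : C) :
    sliceMatrix b c φ (x ⊗ₜ (y ⊗ₜ z)) = φ x • vecMulVec (b.equivFun y) (c.equivFun z) :=
  rfl

theorem sliceMatrix_typeIVTensor (a : Fin 3 → A) (b : Module.Basis (Fin 3) K B)
    (c : Module.Basis (Fin 3) K C) (φ : A →ₗ[K] K) :
    sliceMatrix b c φ (typeIVTensor a b c) = typeIVSlice (φ ∘ a) := by
  simp only [typeIVTensor, TensorProduct.tmul_add, map_add, sliceMatrix_tmul]
  ext k l
  fin_cases k <;> fin_cases l <;> simp [typeIVSlice, vecMulVec_apply]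

theorem typeIVTensor_not_hasRankDecomp_four [Infinite K] (a : Module.Basis (Fin 3) K A)
    (b : Module.Basis (Fin 3) K B) (c : Module.Basis (Fin 3) K C) :
    ¬ HasRankDecomp (typeIVTensor (K := K) a b c) 4 := by
  rintro ⟨x, y, z, hT⟩
  refine not_sum_four_smul_vecMulVec_eq_typeIVSlice (fun i => a.equivFun (x i))
    (fun i => b.equivFun (y i)) (fun i => c.equivFun (z i)) fun u => ?_
  have hφ : a.constr K u ∘ a = u := funext (a.constr_basis K u)
  have hslice := congrArg (sliceMatrix b c (a.constr K u)) hT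
  rw [sliceMatrix_typeIVTensor, map_sum, hφ] at hslice
  simp only [sliceMatrix_tmul, ← a.equivFun_dotProduct_comp, hφ] at hslice
  exact hslice.symm

end Slice

/-- The tensor `a₁⊗(b₁⊗c₂ + b₂⊗c₁) + a₂⊗b₁⊗c₁ + a₃⊗(b₃⊗c₁ + b₁⊗c₃)`
(with `{aᵢ}, {bᵢ}, {cᵢ}` bases of 3-dimensional spaces) has tensor rank exactly 5. -/
theorem rank_type_iv_tensor_eq_five {A B C : Type*}
    [AddCommGroup A] [Module ℂ A] [AddCommGroup B] [Module ℂ B] [AddCommGroup C] [Module ℂ C]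
    (a : Module.Basis (Fin 3) ℂ A) (b : Module.Basis (Fin 3) ℂ B) (c : Module.Basis (Fin 3) ℂ C) :
    IsLeast {r : ℕ | ∃ (x : Fin r → A) (y : Fin r → B) (z : Fin r → C),
        (a 0 ⊗ₜ[ℂ] (b 0 ⊗ₜ[ℂ] c 1 + b 1 ⊗ₜ[ℂ] c 0) + a 1 ⊗ₜ[ℂ] (b 0 ⊗ₜ[ℂ] c 0)
          + a 2 ⊗ₜ[ℂ] (b 2 ⊗ₜ[ℂ] c 0 + b 0 ⊗ₜ[ℂ] c 2)
          : A ⊗[ℂ] (B ⊗[ℂ] C))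
          = ∑ i, x i ⊗ₜ[ℂ] (y i ⊗ₜ[ℂ] z i)} 5 := by
  change IsLeast {r | HasRankDecomp (typeIVTensor (K := ℂ) a b c) r} 5
  refine ⟨typeIVTensor_hasRankDecomp_five a b c, fun r hr => ?_⟩
  by_contra! hr5
  exact typeIVTensor_not_hasRankDecomp_four a b c (hr.mono (by omega))
end
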